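/- Let n ≥ 2. If y = Φ_n(a,b,z) and η = Ψ_n(α,β,x), with a > 0, α > 0, b, β ∈ ℝ, z ∈ P_{A_{n−1}}, x ∈ Q_{A_{n−1}}, then tr(yη) = aα + a·x_{22}·(b+β)² + tr(zx). -/

import Mathlib

open Matrix

noncomputable section

/-- Tridiagonal symmetric real `n × n` matrices (the space `Z_G` for `G = A_n`). -/
def ZG (n : ℕ) : Set (Matrix (Fin n) (Fin n) ℝ) :=
  {y | y.IsSymm ∧ ∀ i j : Fin n, ((i : ℕ) + 1 < (j : ℕ) ∨ (j : ℕ) + 1 < (i : ℕ)) → y i j = 0}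

/-- The cone `P_G` of positive definite matrices in `Z_G`. -/
def PG (n : ℕ) : Set (Matrix (Fin n) (Fin n) ℝ) :=
  {y | y ∈ ZG n ∧ y.PosDef}

/-- The dual cone `Q_G`. -/
def QG (n : ℕ) : Set (Matrix (Fin n) (Fin n) ℝ) :=
  {η | η ∈ ZG n ∧ (∀ i : Fin n, 0 < η i i) ∧
    ∀ i j : Fin n, (i : ℕ) + 1 = (j : ℕ) → 0 < η i i * η j j - (η i j) ^ 2}

/-- The recurrent-construction map `Φ` for the cones `P`. -/
def Phi {n : ℕ} (a b : ℝ) (z : Matrix (Fin (n + 1)) (Fin (n + 1)) ℝ) :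
    Matrix (Fin (n + 2)) (Fin (n + 2)) ℝ :=
  Matrix.of fun i j =>
    if (i : ℕ) = 0 ∧ (j : ℕ) = 0 then a
    else if ((i : ℕ) = 0 ∧ (j : ℕ) = 1) ∨ ((i : ℕ) = 1 ∧ (j : ℕ) = 0) then a * b
    else if (i : ℕ) = 0 ∨ (j : ℕ) = 0 then 0
    else (if (i : ℕ) = 1 ∧ (j : ℕ) = 1 then a * b ^ 2 else 0) +
      z ⟨(i : ℕ) - 1, by have := i.isLt; omega⟩ ⟨(j : ℕ) - 1, by have := j.isLt; omega⟩

/-- The recurrent-construction map `Ψ` for the cones `Q`. -/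
def Psi {n : ℕ} (α β : ℝ) (x : Matrix (Fin (n + 1)) (Fin (n + 1)) ℝ) :
    Matrix (Fin (n + 2)) (Fin (n + 2)) ℝ :=
  Matrix.of fun i j =>
    if (i : ℕ) = 0 ∧ (j : ℕ) = 0 then α + β ^ 2 * x 0 0
    else if ((i : ℕ) = 0 ∧ (j : ℕ) = 1) ∨ ((i : ℕ) = 1 ∧ (j : ℕ) = 0) then β * x 0 0
    else if (i : ℕ) = 0 ∨ (j : ℕ) = 0 then 0
    else x ⟨(i : ℕ) - 1, by have := i.isLt; omega⟩ ⟨(j : ℕ) - 1, by have := j.isLt; omega⟩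

/-! Expand the trace along the first index: the corner gives `aα + aβ²x₂₂`, the two border
entries `2abβx₂₂`, and the remaining block is `tr((z + ab² E₂₂) x) = tr(zx) + ab²x₂₂`. -/

theorem Matrix.trace_mul_fin_succ {R : Type*} [NonUnitalNonAssocSemiring R] {n : ℕ}
    (A B : Matrix (Fin (n + 1)) (Fin (n + 1)) R) :
    trace (A * B) = A 0 0 * B 0 0 +
      ∑ i : Fin n, (A 0 i.succ * B i.succ 0 + A i.succ 0 * B 0 i.succ) +
      trace (A.submatrix Fin.succ Fin.succ * B.submatrix Fin.succ Fin.succ) := by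
  simp only [trace, diag, mul_apply, submatrix_apply, Fin.sum_univ_succ, Finset.sum_add_distrib]
  abel

section

variable {n : ℕ} (a b α β : ℝ) (z x : Matrix (Fin (n + 1)) (Fin (n + 1)) ℝ)

theorem Phi_zero_zero : Phi a b z 0 0 = a := by
  simp [Phi]

theorem Phi_zero_succ (i : Fin (n + 1)) : Phi a b z 0 i.succ = if i = 0 then a * b else 0 := by
  simp [Phi, Fin.ext_iff, -Fin.val_eq_zero_iff]

theorem Phi_succ_zero (i : Fin (n + 1)) : Phi a b z i.succ 0 = if i = 0 then a * b else 0 := by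
  simp [Phi, Fin.ext_iff, -Fin.val_eq_zero_iff]

theorem Phi_submatrix_succ :
    (Phi a b z).submatrix Fin.succ Fin.succ = single 0 0 (a * b ^ 2) + z := by
  ext i j
  simp [Phi, single, Fin.ext_iff, eq_comm, -Fin.val_eq_zero_iff]

theorem Psi_zero_zero : Psi α β x 0 0 = α + β ^ 2 * x 0 0 := by
  simp [Psi]

theorem Psi_zero_succ (i : Fin (n + 1)) :
    Psi α β x 0 i.succ = if i = 0 then β * x 0 0 else 0 := by
  simp [Psi, Fin.ext_iff, -Fin.val_eq_zero_iff]

theorem Psi_succ_zero (i : Fin (n + 1)) :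
    Psi α β x i.succ 0 = if i = 0 then β * x 0 0 else 0 := by
  simp [Psi, Fin.ext_iff, -Fin.val_eq_zero_iff]

theorem Psi_submatrix_succ : (Psi α β x).submatrix Fin.succ Fin.succ = x := by
  ext i j
  simp [Psi, -Fin.val_eq_zero_iff]

end

theorem stmt6_general (n : ℕ) (a b α β : ℝ)
    (z x : Matrix (Fin (n + 1)) (Fin (n + 1)) ℝ) :
    Matrix.trace (Phi a b z * Psi α β x) =
      a * α + a * x 0 0 * (b + β) ^ 2 + Matrix.trace (z * x) := by
  rw [trace_mul_fin_succ, Phi_submatrix_succ, Psi_submatrix_succ, add_mul, trace_add,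
    trace_single_mul]
  simp only [Phi_zero_zero, Psi_zero_zero, Phi_zero_succ, Phi_succ_zero, Psi_zero_succ,
    Psi_succ_zero, ite_mul, zero_mul, Finset.sum_add_distrib, Finset.sum_ite_eq', Finset.mem_univ,
    if_true, smul_eq_mul]
  ring

/-- If `y = Φ(a, b, z)` and `η = Ψ(α, β, x)`, then
`tr(yη) = aα + a x₂₂ (b + β)² + tr(zx)` (here `x₂₂ = x 0 0` after relabelling). -/
theorem stmt6 (n : ℕ) (a b α β : ℝ) (ha : 0 < a) (hα : 0 < α)
    (z x : Matrix (Fin (n + 1)) (Fin (n + 1)) ℝ) (hz : z ∈ PG (n + 1)) (hx : x ∈ QG (n + 1)) :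
    Matrix.trace (Phi a b z * Psi α β x) =
      a * α + a * x 0 0 * (b + β) ^ 2 + Matrix.trace (z * x) :=
  stmt6_general n a b α β z x
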